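/- arXiv:2107.02370 — 2 statements merged into one kernel-verified Lean document; each statement's English description precedes it below -/
import Mathlib

section
/- Let $r \ge m, t \ge 2$ with $m(t-1) \le r \le mt-1$. Then there exists an $r$-partite graph $G$ with parts of size $n$ and chromatic number at most $t$ such that $\delta(G) = (r-1)n - (m-1)\lceil \frac{(r-1)n}{mt-2} \rceil$. In particular, $\delta(n,r,t) \ge (r-1)n - (m-1)\lceil \frac{(r-1)n}{mt-2} \rceil$. -/
open scoped Classical

/-- `G` is an `r`-partite graph on `Fin r × Fin n` with parts the fibers of `Prod.fst`. -/
def IsPartite {r n : ℕ} (G : SimpleGraph (Fin r × Fin n)) : Prop :=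
  ∀ v w, G.Adj v w → v.1 ≠ w.1

/-- `deltaP n r t` : the largest minimum degree among `r`-partite graphs with parts
of size `n` and chromatic number at most `t`. -/
noncomputable def deltaP (n r t : ℕ) : ℕ :=
  sSup {d | ∃ G : SimpleGraph (Fin r × Fin n),
    IsPartite G ∧ G.chromaticNumber ≤ (t : ℕ∞) ∧ G.minDegree = d}

/-! Group the first `m(t-1)` parts into `t-1` blocks of `m` consecutive parts and put
`q = ⌈(r-1)n/(mt-2)⌉`. The first `q` vertices of each part of block `c` get colour `c`, all other
vertices share one extra colour, and two vertices are adjacent iff they lie in different parts and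
have different colours. A vertex of colour `c` is non-adjacent outside its part exactly to the
`(m-1)q` other vertices of colour `c`, so it has degree `(r-1)n - (m-1)q`. A vertex of the extra
colour is adjacent to at least `(m(t-1)-1)q` coloured vertices, and
`(m(t-1)-1)q + (m-1)q = (mt-2)q ≥ (r-1)n` by the choice of `q`. -/

open Finset

lemma card_filter_fst_and_snd {α β : Type*} [Fintype α] [Fintype β] (p : α → Prop)
    (q : β → Prop) [DecidablePred p] [DecidablePred q] :
    #{x : α × β | p x.1 ∧ q x.2} = #{a | p a} * #{b | q b} := by
  rw [← univ_product_univ, filter_product, card_product]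

lemma card_filter_fst_ne {α β : Type*} [Fintype α] [Fintype β] [DecidableEq α] (a : α) :
    #{x : α × β | x.1 ≠ a} = (Fintype.card α - 1) * Fintype.card β := by
  simpa [filter_ne', card_erase_of_mem] using card_filter_fst_and_snd (β := β) (· ≠ a) fun _ => True

lemma Fin.card_filter_val_div_eq {r m c : ℕ} (hm : 0 < m) (hc : (c + 1) * m ≤ r) :
    #{i : Fin r | i.val / m = c} = m := by
  have : {x ∈ Iio r | x / m = c} = Ico (c * m) ((c + 1) * m) := by
    ext x
    simp only [mem_filter, mem_Iio, mem_Ico, Nat.div_eq_iff hm]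
    rw [add_one_mul] at hc ⊢
    omega
  calc #{i : Fin r | i.val / m = c} = #{x ∈ Iio r | x / m = c} := by
        rw [← Fin.map_valEmbedding_univ, filter_map, card_map]; rfl
    _ = m := by simp [this, add_one_mul]

lemma Fin.card_filter_ne_and_div_eq {r m : ℕ} (hm : 0 < m) (i : Fin r)
    (hi : (i.val / m + 1) * m ≤ r) : #{j : Fin r | j ≠ i ∧ j.val / m = i.val / m} = m - 1 := by
  have : ({j : Fin r | j ≠ i ∧ j.val / m = i.val / m} : Finset _)
      = ({j : Fin r | j.val / m = i.val / m} : Finset _).erase i := by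
    ext; simp
  rw [this, card_erase_of_mem (by simp), Fin.card_filter_val_div_eq hm hi]

namespace SimpleGraph

variable {V α β : Type*}

def crossGraph (f : V → α) (g : V → β) : SimpleGraph V :=
  (⊤ : SimpleGraph α).comap f ⊓ (⊤ : SimpleGraph β).comap g

variable {f : V → α} {g : V → β}

@[simp]
lemma crossGraph_adj {u w : V} : (crossGraph f g).Adj u w ↔ f u ≠ f w ∧ g u ≠ g w := by
  simp [crossGraph]

lemma chromaticNumber_crossGraph_le [Fintype β] :
    (crossGraph f g).chromaticNumber ≤ Fintype.card β :=
  (Coloring.mk g fun h => (crossGraph_adj.1 h).2).colorable.chromaticNumber_le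

lemma degree_crossGraph_add [Fintype V] [DecidableEq α] [DecidableEq β] (v : V) :
    (crossGraph f g).degree v + #{u | f u ≠ f v ∧ g u = g v} = #{u | f u ≠ f v} := by
  rw [← card_neighborFinset_eq_degree, neighborFinset_eq_filter,
    ← card_filter_add_card_filter_not (s := {u | f u ≠ f v}) (fun u => g u ≠ g v)]
  simp only [filter_filter, crossGraph_adj, not_not]
  simp only [ne_comm, eq_comm]

lemma minDegree_le_card [Fintype V] (G : SimpleGraph V) [DecidableRel G.Adj] :
    G.minDegree ≤ Fintype.card V := by
  cases isEmpty_or_nonempty V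
  · simp [minDegree_of_subsingleton]
  · exact G.minDegree_lt_card.le

end SimpleGraph

lemma le_deltaP {n r t : ℕ} {G : SimpleGraph (Fin r × Fin n)} (hG : IsPartite G)
    (hχ : G.chromaticNumber ≤ t) : G.minDegree ≤ deltaP n r t :=
  le_csSup ⟨r * n, by rintro _ ⟨H, -, -, rfl⟩; simpa using H.minDegree_le_card⟩ ⟨G, hG, hχ, rfl⟩

section BlockColoring

variable {r n : ℕ} (m s q : ℕ)

def blockColoring (u : Fin r × Fin n) : Option (Fin s) :=
  if h : u.1.val < m * s ∧ u.2.val < q then some ⟨u.1 / m, Nat.div_lt_of_lt_mul h.1⟩ else none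

abbrev blockGraph : SimpleGraph (Fin r × Fin n) :=
  SimpleGraph.crossGraph Prod.fst (blockColoring m s q)

variable {m s q}

lemma blockColoring_eq_none_iff {u : Fin r × Fin n} :
    blockColoring m s q u = none ↔ ¬(u.1.val < m * s ∧ u.2.val < q) := by
  simp [blockColoring]

lemma blockColoring_eq_some_iff (hm : 0 < m) {u : Fin r × Fin n} {c : Fin s} :
    blockColoring m s q u = some c ↔ u.1.val / m = c ∧ u.2.val < q := by
  unfold blockColoring
  split_ifs with h
  · simp [Fin.ext_iff, h.2]
  · simp only [false_iff, not_and]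
    intro hdiv hq
    exact h ⟨(Nat.div_lt_iff_lt_mul hm).1 (hdiv ▸ c.isLt) |>.trans_eq (mul_comm _ _), hq⟩

lemma isPartite_blockGraph : IsPartite (blockGraph m s q : SimpleGraph (Fin r × Fin n)) :=
  fun _ _ h => (SimpleGraph.crossGraph_adj.1 h).1

lemma chromaticNumber_blockGraph_le :
    (blockGraph m s q : SimpleGraph (Fin r × Fin n)).chromaticNumber ≤ (s + 1 : ℕ) := by
  simpa using SimpleGraph.chromaticNumber_crossGraph_le (f := Prod.fst)
    (g := blockColoring (r := r) (n := n) m s q)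

lemma degree_blockGraph_add_of_eq_some (hm : 0 < m) (hs : m * s ≤ r) (hqn : q ≤ n)
    {v : Fin r × Fin n} {c : Fin s} (hv : blockColoring m s q v = some c) :
    (blockGraph m s q).degree v + (m - 1) * q = (r - 1) * n := by
  have hvc := ((blockColoring_eq_some_iff hm).1 hv).1
  have hblock : (v.1.val / m + 1) * m ≤ r := by
    rw [hvc]
    nlinarith [c.isLt]
  have hsame : #{u : Fin r × Fin n | u.1 ≠ v.1 ∧ blockColoring m s q u = blockColoring m s q v}
      = (m - 1) * q := by
    simp_rw [hv, blockColoring_eq_some_iff hm, ← hvc, ← and_assoc]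
    rw [card_filter_fst_and_snd (fun i => i ≠ v.1 ∧ i.val / m = v.1.val / m)
        (fun j : Fin n => j.val < q), Fin.card_filter_ne_and_div_eq hm v.1 hblock,
      Fin.card_filter_val_lt, min_eq_right hqn]
  have := SimpleGraph.degree_crossGraph_add (f := Prod.fst) (g := blockColoring m s q) v
  rwa [hsame, card_filter_fst_ne, Fintype.card_fin, Fintype.card_fin] at this

lemma mul_le_degree_blockGraph_of_eq_none (hs : m * s ≤ r) (hqn : q ≤ n) {v : Fin r × Fin n}
    (hv : blockColoring m s q v = none) : (m * s - 1) * q ≤ (blockGraph m s q).degree v := by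
  have hparts : m * s - 1 ≤ #{i : Fin r | i ≠ v.1 ∧ i.val < m * s} := by
    have := pred_card_le_card_erase (s := ({i : Fin r | i.val < m * s} : Finset _)) (a := v.1)
    rw [Fin.card_filter_val_lt, min_eq_right hs] at this
    exact this.trans (card_le_card fun i => by simp)
  have hneighbors : ({u | (u.1 ≠ v.1 ∧ u.1.val < m * s) ∧ u.2.val < q} : Finset _) ⊆
      (blockGraph m s q).neighborFinset v := by
    intro u hu
    simp only [mem_filter, mem_univ, true_and] at hu
    rw [SimpleGraph.mem_neighborFinset, SimpleGraph.crossGraph_adj, hv]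
    exact ⟨hu.1.1.symm, fun h => blockColoring_eq_none_iff.1 h.symm ⟨hu.1.2, hu.2⟩⟩
  calc (m * s - 1) * q
      ≤ #{i : Fin r | i ≠ v.1 ∧ i.val < m * s} * #{j : Fin n | j.val < q} := by
        rw [Fin.card_filter_val_lt, min_eq_right hqn]
        exact Nat.mul_le_mul_right q hparts
    _ = #{u : Fin r × Fin n | (u.1 ≠ v.1 ∧ u.1.val < m * s) ∧ u.2.val < q} :=
        (card_filter_fst_and_snd _ _).symm
    _ ≤ (blockGraph m s q).degree v := by
        rw [← SimpleGraph.card_neighborFinset_eq_degree]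
        exact card_le_card hneighbors

lemma minDegree_blockGraph (hm : 0 < m) (hs₀ : 0 < s) (hs : m * s ≤ r) (hq₀ : 0 < q)
    (hqn : q ≤ n) (hN : (r - 1) * n ≤ (m * s + m - 2) * q) :
    (blockGraph m s q : SimpleGraph (Fin r × Fin n)).minDegree = (r - 1) * n - (m - 1) * q := by
  have hms : 0 < m * s := Nat.mul_pos hm hs₀
  let v₀ : Fin r × Fin n := (⟨0, by omega⟩, ⟨0, by omega⟩)
  have : Nonempty (Fin r × Fin n) := ⟨v₀⟩
  obtain ⟨c₀, hv₀⟩ := Option.ne_none_iff_exists'.1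
    (mt blockColoring_eq_none_iff.1 (not_not.2 ⟨hms, hq₀⟩) : blockColoring m s q v₀ ≠ none)
  refine le_antisymm ?_ (SimpleGraph.le_minDegree_of_forall_le_degree _ _ fun v => ?_)
  · have := degree_blockGraph_add_of_eq_some hm hs hqn hv₀
    have := (blockGraph m s q).minDegree_le_degree v₀
    omega
  cases hv : blockColoring m s q v with
  | some c =>
    have := degree_blockGraph_add_of_eq_some hm hs hqn hv
    omega
  | none =>
    have := mul_le_degree_blockGraph_of_eq_none hs hqn hv
    have : (m * s - 1) * q + (m - 1) * q = (m * s + m - 2) * q := by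
      rw [← add_mul]; congr 1; omega
    omega

end BlockColoring

theorem stmt10_general (n r m t : ℕ) (hn : 1 ≤ n) (hm : 2 ≤ m) (ht : 2 ≤ t)
    (h1 : m * (t - 1) ≤ r) (h2 : r ≤ m * t - 1) :
    (∃ G : SimpleGraph (Fin r × Fin n), IsPartite G ∧ G.chromaticNumber ≤ (t : ℕ∞) ∧
      G.minDegree = (r - 1) * n - (m - 1) * (((r - 1) * n) ⌈/⌉ (m * t - 2))) ∧
    (r - 1) * n - (m - 1) * (((r - 1) * n) ⌈/⌉ (m * t - 2)) ≤ deltaP n r t := by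
  set q := ((r - 1) * n) ⌈/⌉ (m * t - 2)
  have hms : 2 ≤ m * (t - 1) := Nat.mul_le_mul hm (by omega : 1 ≤ t - 1)
  have hmt : m * (t - 1) + m - 2 = m * t - 2 := by
    rw [Nat.mul_sub_one]
    have := Nat.le_mul_of_pos_right m (by omega : 0 < t)
    omega
  have hk : 0 < m * t - 2 := by omega
  have hN : (r - 1) * n ≤ (m * t - 2) * q := (ceilDiv_le_iff_le_mul hk).1 le_rfl
  have hqn : q ≤ n := (ceilDiv_le_iff_le_mul hk).2 (Nat.mul_le_mul_right n (by omega))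
  have hq₀ : 0 < q := Nat.pos_of_ne_zero fun hq => by
    have : 0 < (r - 1) * n := Nat.mul_pos (by omega) hn
    rw [hq, mul_zero] at hN
    omega
  have hG := minDegree_blockGraph (r := r) (n := n) (by omega) (by omega) h1 hq₀ hqn (hmt ▸ hN)
  have hχ : (blockGraph m (t - 1) q : SimpleGraph (Fin r × Fin n)).chromaticNumber ≤ t := by
    have := chromaticNumber_blockGraph_le (r := r) (n := n) (m := m) (s := t - 1) (q := q)
    rwa [Nat.sub_add_cancel (by omega : 1 ≤ t)] at this
  exact ⟨⟨_, isPartite_blockGraph, hχ, hG⟩, hG ▸ le_deltaP isPartite_blockGraph hχ⟩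

/-- Let `r ≥ m, t ≥ 2` with `m(t-1) ≤ r ≤ mt-1`. There is an `r`-partite graph `G` with
parts of size `n` and chromatic number at most `t` such that
`δ(G) = (r-1)n - (m-1)⌈(r-1)n/(mt-2)⌉`; in particular `δ(n,r,t)` is at least this value. -/
theorem stmt10 (n r m t : ℕ) (hn : 1 ≤ n) (hm : 2 ≤ m) (ht : 2 ≤ t)
    (hmr : m ≤ r) (htr : t ≤ r) (h1 : m * (t - 1) ≤ r) (h2 : r ≤ m * t - 1) :
    (∃ G : SimpleGraph (Fin r × Fin n), IsPartite G ∧ G.chromaticNumber ≤ (t : ℕ∞) ∧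
      G.minDegree = (r - 1) * n - (m - 1) * (((r - 1) * n) ⌈/⌉ (m * t - 2))) ∧
    (r - 1) * n - (m - 1) * (((r - 1) * n) ⌈/⌉ (m * t - 2)) ≤ deltaP n r t :=
  stmt10_general n r m t hn hm ht h1 h2
end

section
/- Let $m, t \ge 2$ and $r = mt - a$ with $2 \le a \le \min\{m, t-1\}$. If $\frac{r}{t(3t-1)(m-1)} - \frac{a}{t(m-1)} + \frac{a-1}{tm-2} \ge \frac{1}{n}$, then $f(n,r,t+1) = \delta(n,r,t)$. -/
open scoped Classical

/-- `f n r c` : the largest minimum degree among `r`-partite graphs with parts of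
size `n` containing no copy of `K_c`. -/
noncomputable def f (n r c : ℕ) : ℕ :=
  sSup {d | ∃ G : SimpleGraph (Fin r × Fin n),
    IsPartite G ∧ G.CliqueFree c ∧ G.minDegree = d}

open Finset SimpleGraph

/-! Split the first `m(t-1)` parts into `t-1` blocks of `m` consecutive parts; in block `i` the
vertices of index at least `x` get color `i`, all other vertices get color `t-1`, and two
vertices are joined when they lie in different parts and have different colors. This graph is
`t`-colorable, and for `x = ⌊(a-1)n/(tm-2)⌋` (the largest `x` keeping the last color class
small enough) every vertex has at most `n + (m-1)(n-x)` non-neighbours, itself included. The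
density hypothesis makes this less than `3rn/(3t-1)`, so the minimum degree exceeds the
Andrásfai–Erdős–Sós threshold `(3t-4)rn/(3t-1)`. Hence so does that of an extremal
`K_{t+1}`-free graph, which is therefore `t`-colorable. -/

section Extremal

variable {n r t : ℕ}

lemma minDegree_le_mul (G : SimpleGraph (Fin r × Fin n)) : G.minDegree ≤ r * n := by
  cases isEmpty_or_nonempty (Fin r × Fin n)
  · simp
  · simpa using G.minDegree_lt_card.le

lemma bddAbove_of_forall_exists_minDegree_eq {s : Set ℕ}
    (hs : ∀ d ∈ s, ∃ G : SimpleGraph (Fin r × Fin n), G.minDegree = d) : BddAbove s :=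
  ⟨r * n, fun d hd => by obtain ⟨G, rfl⟩ := hs d hd; exact minDegree_le_mul G⟩

lemma deltaP_le_f (n r t : ℕ) : deltaP n r t ≤ f n r (t + 1) :=
  csSup_le_csSup' (bddAbove_of_forall_exists_minDegree_eq fun _ ⟨G, _, _, hG⟩ => ⟨G, hG⟩)
    fun _ ⟨G, hG, hχ, hd⟩ =>
      ⟨G, hG, (chromaticNumber_le_iff_colorable.1 hχ).cliqueFree t.lt_succ_self, hd⟩

lemma div_lt_minDegree_of_deficit (ht : 2 ≤ t) {D : ℕ} (G : SimpleGraph (Fin r × Fin n))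
    (hD : (3 * t - 1) * D < 3 * (r * n)) (hdeg : ∀ v, r * n ≤ G.degree v + D) :
    (3 * t - 4) * (r * n) / (3 * t - 1) < G.minDegree := by
  have : Nonempty (Fin r × Fin n) :=
    Fintype.card_pos_iff.1 (by simp only [Fintype.card_prod, Fintype.card_fin]; omega)
  obtain ⟨v, hv⟩ := G.exists_minimal_degree_vertex
  rw [hv, Nat.div_lt_iff_lt_mul (by omega)]
  have hv := hdeg v
  zify [show 4 ≤ 3 * t by omega, show 1 ≤ 3 * t by omega] at hD hv ⊢
  nlinarith

theorem f_eq_deltaP_of_deficit (ht : 2 ≤ t) {D : ℕ} (G : SimpleGraph (Fin r × Fin n))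
    (hG : IsPartite G) (hcol : G.Colorable t) (hD : (3 * t - 1) * D < 3 * (r * n))
    (hdeg : ∀ v, r * n ≤ G.degree v + D) :
    f n r (t + 1) = deltaP n r t := by
  have hbdd := bddAbove_of_forall_exists_minDegree_eq (r := r) (n := n)
    (s := {d | ∃ G : SimpleGraph (Fin r × Fin n), IsPartite G ∧ G.CliqueFree (t + 1) ∧
      G.minDegree = d}) fun _ ⟨G, _, _, hG⟩ => ⟨G, hG⟩
  have hGmem : G.minDegree ∈ {d | ∃ G : SimpleGraph (Fin r × Fin n),
      IsPartite G ∧ G.CliqueFree (t + 1) ∧ G.minDegree = d} :=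
    ⟨G, hG, hcol.cliqueFree t.lt_succ_self, rfl⟩
  obtain ⟨H, hH, hHcf, hHf⟩ := Nat.sSup_mem ⟨_, hGmem⟩ hbdd
  have hGH : G.minDegree ≤ H.minDegree := hHf ▸ le_csSup hbdd hGmem
  have hHcol : H.Colorable t := colorable_of_cliqueFree_lt_minDegree hHcf <| by
    simpa using (div_lt_minDegree_of_deficit ht G hD hdeg).trans_le hGH
  refine le_antisymm ?_ (deltaP_le_f n r t)
  exact le_csSup (bddAbove_of_forall_exists_minDegree_eq fun _ ⟨G, _, _, hG⟩ => ⟨G, hG⟩)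
    ⟨H, hH, hHcol.chromaticNumber_le, hHf⟩

end Extremal

section PartiteColorGraph

variable {n r : ℕ}

def partiteColorGraph {α : Type*} (c : Fin r × Fin n → α) : SimpleGraph (Fin r × Fin n) where
  Adj v w := v.1 ≠ w.1 ∧ c v ≠ c w
  symm := ⟨fun _ _ h => ⟨h.1.symm, h.2.symm⟩⟩
  loopless := ⟨fun _ h => h.1 rfl⟩

@[simp]
lemma partiteColorGraph_adj {α : Type*} (c : Fin r × Fin n → α) (v w : Fin r × Fin n) :
    (partiteColorGraph c).Adj v w ↔ v.1 ≠ w.1 ∧ c v ≠ c w :=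
  Iff.rfl

lemma isPartite_partiteColorGraph {α : Type*} (c : Fin r × Fin n → α) :
    IsPartite (partiteColorGraph c) :=
  fun _ _ h => ((partiteColorGraph_adj c _ _).1 h).1

lemma colorable_partiteColorGraph {t : ℕ} {c : Fin r × Fin n → ℕ} (hc : ∀ v, c v < t) :
    (partiteColorGraph c).Colorable t :=
  ⟨Coloring.mk (fun v => ⟨c v, hc v⟩) fun h heq =>
    ((partiteColorGraph_adj c _ _).1 h).2 (congrArg Fin.val heq)⟩

lemma mul_add_card_le_degree_partiteColorGraph {α : Type*} [DecidableEq α]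
    (c : Fin r × Fin n → α) (v : Fin r × Fin n) {S : Finset (Fin n)}
    (hS : ∀ u ∈ S, c (v.1, u) = c v) :
    r * n + #S ≤ (partiteColorGraph c).degree v + (n + #{w | c w = c v}) := by
  set P : Finset (Fin r × Fin n) := {w | w.1 = v.1}
  set C : Finset (Fin r × Fin n) := {w | c w = c v}
  have hdeg : (partiteColorGraph c).degree v + #(P ∪ C) = r * n := by
    have hnon : P ∪ C = ({w | ¬(partiteColorGraph c).Adj v w} : Finset _) := by
      ext w
      simp only [P, C, ← filter_or, mem_filter, partiteColorGraph_adj]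
      grind
    rw [← card_neighborFinset_eq_degree, neighborFinset_eq_filter, hnon,
      card_filter_add_card_filter_not]
    simp
  have hP : #P ≤ n := by
    have := card_le_card_of_injOn Prod.snd (s := P) (t := univ) (fun _ _ => mem_univ _)
      fun w hw w' hw' h => Prod.ext (by simp_all [P]) h
    simpa using this
  have hS' : #S ≤ #(P ∩ C) :=
    card_le_card_of_injOn (fun u => (v.1, u)) (fun u hu => by simp [P, C, hS u hu])
      fun _ _ _ _ h => (Prod.mk.inj h).2
  have := card_union_add_card_inter P C
  omega

end PartiteColorGraph

section BlockColor

variable {n r m t a x : ℕ}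

lemma card_filter_le_card_of_val_mem {p : Fin r → Prop} [DecidablePred p] (s : Finset ℕ)
    (hs : ∀ j, p j → (j : ℕ) ∈ s) : #{j | p j} ≤ #s :=
  card_le_card_of_injOn Fin.val (fun j hj => hs j (mem_filter.1 hj).2) Fin.val_injective.injOn

def blockColor (m t x : ℕ) (v : Fin r × Fin n) : ℕ :=
  if (v.1 : ℕ) < m * (t - 1) ∧ x ≤ (v.2 : ℕ) then v.1 / m else t - 1

lemma blockColor_lt (ht : 0 < t) (v : Fin r × Fin n) : blockColor m t x v < t := by
  unfold blockColor
  split_ifs with h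
  · exact lt_of_lt_of_le (Nat.div_lt_of_lt_mul h.1) (Nat.sub_le t 1)
  · omega

lemma card_blockColor_eq_le (hm : 0 < m) {i : ℕ} (hi : i < t - 1) :
    #{w : Fin r × Fin n | blockColor m t x w = i} ≤ m * (n - x) := by
  calc #{w : Fin r × Fin n | blockColor m t x w = i}
      ≤ #(({j : Fin r | (j : ℕ) / m = i} : Finset _) ×ˢ
          ({u : Fin n | x ≤ (u : ℕ)} : Finset _)) := by
        refine card_le_card fun w hw => ?_
        rw [mem_filter] at hw
        simp only [blockColor, mem_filter, mem_univ, true_and, mem_product] at hw ⊢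
        split_ifs at hw with h
        · exact ⟨hw, h.2⟩
        · omega
    _ ≤ m * (n - x) := by
        rw [card_product]
        refine Nat.mul_le_mul ((card_filter_le_card_of_val_mem (Ico (i * m) (i * m + m))
          fun j hj => ?_).trans (by simp)) ((card_filter_le_card_of_val_mem (Ico x n)
          fun u hu => ?_).trans (by simp))
        · have := (Nat.div_eq_iff hm).1 hj
          simp only [mem_Ico]
          omega
        · simp only [mem_Ico]
          exact ⟨hu, u.isLt⟩

lemma card_blockColor_eq_sub_one_le :
    #{w : Fin r × Fin n | blockColor m t x w = t - 1} ≤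
      (r - m * (t - 1)) * n + m * (t - 1) * x := by
  calc #{w : Fin r × Fin n | blockColor m t x w = t - 1}
      ≤ #(({j : Fin r | m * (t - 1) ≤ (j : ℕ)} : Finset _) ×ˢ (univ : Finset (Fin n)) ∪
          ({j : Fin r | (j : ℕ) < m * (t - 1)} : Finset _) ×ˢ
          ({u : Fin n | (u : ℕ) < x} : Finset _)) := by
        refine card_le_card fun w hw => ?_
        rw [mem_filter] at hw
        simp only [blockColor, mem_filter, mem_univ, true_and, mem_product, mem_union,
          and_true] at hw ⊢
        split_ifs at hw with h
        · exact absurd hw (Nat.div_lt_of_lt_mul h.1).ne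
        · omega
    _ ≤ (r - m * (t - 1)) * n + m * (t - 1) * x := by
        refine (card_union_le _ _).trans ?_
        rw [card_product, card_product, card_univ, Fintype.card_fin]
        gcongr
        · exact (card_filter_le_card_of_val_mem (Ico (m * (t - 1)) r) fun j hj => by
            simp only [mem_Ico]; exact ⟨hj, j.isLt⟩).trans (by simp)
        · exact (card_filter_le_card_of_val_mem (range (m * (t - 1))) fun j hj => by
            simpa).trans (by simp)
        · exact (card_filter_le_card_of_val_mem (range x) fun j hj => by simpa).trans (by simp)

lemma sub_mul_add_mul_le_of_mul_le (hm : 2 ≤ m) (ht : 1 ≤ t) (ha : 1 ≤ a) (ham : a ≤ m)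
    (hr : r = m * t - a) (hxn : x ≤ n) (hx : (t * m - 2) * x ≤ (a - 1) * n) :
    (r - m * (t - 1)) * n + m * (t - 1) * x ≤ (m - 1) * (n - x) + x := by
  have hr' : r - m * (t - 1) = m - a := by
    have := Nat.mul_sub_one m t
    have := Nat.le_mul_of_pos_right m ht
    omega
  have htm : 2 ≤ t * m := by nlinarith
  rw [hr']
  zify [ham, hxn, ht, ha, htm, show 1 ≤ m by omega] at hx ⊢
  nlinarith

lemma mul_le_degree_blockColor (hm : 2 ≤ m) (ht : 1 ≤ t) (ha : 1 ≤ a) (ham : a ≤ m)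
    (hr : r = m * t - a) (hxn : x ≤ n) (hx : (t * m - 2) * x ≤ (a - 1) * n)
    (v : Fin r × Fin n) :
    r * n ≤ (partiteColorGraph (blockColor m t x)).degree v + (n + (m - 1) * (n - x)) := by
  by_cases h : (v.1 : ℕ) < m * (t - 1) ∧ x ≤ (v.2 : ℕ)
  · have hv : blockColor m t x v = v.1 / m := if_pos h
    have hdeg := mul_add_card_le_degree_partiteColorGraph (blockColor m t x) v
      (S := (Ico x n).attachFin fun k hk => (mem_Ico.1 hk).2) fun u hu => by
        rw [mem_attachFin, mem_Ico] at hu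
        rw [hv]
        exact if_pos ⟨h.1, hu.1⟩
    have hC := card_blockColor_eq_le (r := r) (n := n) (m := m) (x := x) (by omega)
      (Nat.div_lt_of_lt_mul h.1)
    rw [card_attachFin, Nat.card_Ico, hv] at hdeg
    have : m * (n - x) = (m - 1) * (n - x) + (n - x) := by
      rw [← Nat.succ_mul, Nat.succ_eq_add_one, Nat.sub_add_cancel (by omega)]
    omega
  · have hv : blockColor m t x v = t - 1 := if_neg h
    have hdeg := mul_add_card_le_degree_partiteColorGraph (blockColor m t x) v
      (S := (range x).attachFin fun k hk => (mem_range.1 hk).trans_le hxn) fun u hu => by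
        rw [mem_attachFin, mem_range] at hu
        rw [hv]
        exact if_neg fun h' => hu.not_ge h'.2
    have hC := card_blockColor_eq_sub_one_le (r := r) (n := n) (m := m) (t := t) (x := x)
    rw [card_attachFin, card_range, hv] at hdeg
    have := sub_mul_add_mul_le_of_mul_le hm ht ha ham hr hxn hx
    omega

end BlockColor

lemma three_mul_sub_one_mul_lt_of_density {n r m t a x : ℕ} (hn : 1 ≤ n) (hm : 2 ≤ m)
    (ht : 2 ≤ t) (ha : 1 ≤ a) (ham : a ≤ m) (hr : r = m * t - a) (hxn : x ≤ n)
    (hx : (a - 1) * n < (t * m - 2) * (x + 1))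
    (hcond : (r : ℚ) / (t * (3 * t - 1) * (m - 1)) - (a : ℚ) / (t * (m - 1))
      + ((a : ℚ) - 1) / (t * m - 2) ≥ 1 / n) :
    (3 * t - 1) * (n + (m - 1) * (n - x)) < 3 * (r * n) := by
  have hmt : a ≤ m * t := ham.trans (Nat.le_mul_of_pos_right m (by omega))
  have htm : 2 ≤ t * m := by nlinarith
  have hR : (r : ℚ) = m * t - a := by rw [hr, Nat.cast_sub hmt]; push_cast; ring
  have hxq : ((a : ℚ) - 1) * n < (t * m - 2) * (x + 1) := by
    qify [ha, htm] at hx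
    exact hx
  have ht' : (2 : ℚ) ≤ t := by exact_mod_cast ht
  have hm' : (2 : ℚ) ≤ m := by exact_mod_cast hm
  have h3t : (0 : ℚ) < 3 * t - 1 := by linarith
  have hm1 : (0 : ℚ) < m - 1 := by linarith
  have hB : (0 : ℚ) < (3 * t - 1) * (m - 1) := mul_pos h3t hm1
  have hD : (0 : ℚ) < t * m - 2 := by
    have : (4 : ℚ) ≤ t * m := by exact_mod_cast (by nlinarith : 4 ≤ t * m)
    linarith
  have hcond' : (3 * t - 1) * (m - 1) * (t * m - 2) ≤
      (n : ℚ) * ((m - 3 * a) * (t * m - 2) + (3 * t - 1) * (m - 1) * (a - 1)) := by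
    have ht0 : (t : ℚ) ≠ 0 := by positivity
    have h1 : (t : ℚ) * (3 * t - 1) * (m - 1) ≠ 0 := by
      have := h3t.ne'; have := hm1.ne'; positivity
    have h2 : (t : ℚ) * (m - 1) ≠ 0 := mul_ne_zero ht0 hm1.ne'
    have e : (r : ℚ) / (t * (3 * t - 1) * (m - 1)) - (a : ℚ) / (t * (m - 1))
        + ((a : ℚ) - 1) / (t * m - 2) =
          ((m - 3 * a) * (t * m - 2) + (3 * t - 1) * (m - 1) * (a - 1)) /
            ((3 * t - 1) * (m - 1) * (t * m - 2)) := by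
      rw [hR, div_sub_div _ _ h1 h2, div_add_div _ _ (mul_ne_zero h1 h2) hD.ne',
        div_eq_div_iff (mul_ne_zero (mul_ne_zero h1 h2) hD.ne') (mul_pos hB hD).ne']
      ring
    rw [e, ge_iff_le, div_le_div_iff₀ (by positivity) (mul_pos hB hD)] at hcond
    linarith
  -- `3rn - (3t-1)(n + (m-1)(n-x))` equals this quantity, and multiplying it by `tm - 2` and
  -- using `(a-1)n < (tm-2)(x+1)` brings it back to `hcond'`.
  have hpos : 0 < (m - 3 * a : ℚ) * n + (3 * t - 1) * (m - 1) * x := by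
    refine pos_of_mul_pos_right (a := (t * m - 2 : ℚ)) ?_ hD.le
    nlinarith [mul_lt_mul_of_pos_left hxq hB]
  qify [hxn, show 1 ≤ m by omega, show 1 ≤ 3 * t by omega]
  rw [hR]
  linarith

theorem stmt12_general (n r m t a : ℕ) (hn : 1 ≤ n) (hm : 2 ≤ m) (ht : 2 ≤ t)
    (ha1 : 2 ≤ a) (ha2 : a ≤ min m (t - 1)) (hr : r = m * t - a)
    (hcond : (r : ℚ) / (t * (3 * t - 1) * (m - 1)) - (a : ℚ) / (t * (m - 1))
      + ((a : ℚ) - 1) / (t * m - 2) ≥ 1 / n) :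
    f n r (t + 1) = deltaP n r t := by
  have ham : a ≤ m := ha2.trans (min_le_left _ _)
  have h2m : 2 * m ≤ t * m := Nat.mul_le_mul_right m ht
  have htm : 0 < t * m - 2 := by omega
  set x := (a - 1) * n / (t * m - 2)
  have hx : (t * m - 2) * x ≤ (a - 1) * n := by rw [mul_comm]; exact Nat.div_mul_le_self _ _
  have hx' : (a - 1) * n < (t * m - 2) * (x + 1) := Nat.lt_mul_div_succ _ htm
  have hxn : x ≤ n := Nat.div_le_of_le_mul (Nat.mul_le_mul_right n (by omega))
  exact f_eq_deltaP_of_deficit ht (partiteColorGraph (blockColor m t x))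
    (isPartite_partiteColorGraph _) (colorable_partiteColorGraph (blockColor_lt (by omega)))
    (three_mul_sub_one_mul_lt_of_density hn hm ht (by omega) ham hr hxn hx' hcond)
    (mul_le_degree_blockColor hm (by omega) (by omega) ham hr hxn hx)

/-- Let `m, t ≥ 2` and `r = mt - a` with `2 ≤ a ≤ min{m, t-1}`. If
`r/(t(3t-1)(m-1)) - a/(t(m-1)) + (a-1)/(tm-2) ≥ 1/n`, then (assuming the
Andrásfai–Erdős–Sós theorem) `f(n,r,t+1) = δ(n,r,t)`. -/
theorem stmt12 (n r m t a : ℕ) (hn : 1 ≤ n) (hm : 2 ≤ m) (ht : 2 ≤ t)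
    (ha1 : 2 ≤ a) (ha2 : a ≤ min m (t - 1)) (hr : r = m * t - a)
    (hcond : (r : ℚ) / (t * (3 * t - 1) * (m - 1)) - (a : ℚ) / (t * (m - 1))
      + ((a : ℚ) - 1) / (t * m - 2) ≥ 1 / n)
    (hAES : ∀ G : SimpleGraph (Fin r × Fin n), G.CliqueFree (t + 1) →
      ((3 * t - 4 : ℚ) / (3 * t - 1)) * (r * n) < G.minDegree →
      G.chromaticNumber ≤ (t : ℕ∞)) :
    f n r (t + 1) = deltaP n r t :=
  stmt12_general n r m t a hn hm ht ha1 ha2 hr hcond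
end
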